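/- For all integers m ≥ 0 and k ≥ 1 there exists an integer b such that φ(b,m,k) = φ_min(m,k) and, for every odd prime p dividing m − 1, F_{b,m}(p) = ⌈m/p⌉ implies F_{b,m}(2p) = ⌈m/(2p)⌉. -/

import Mathlib

open Finset

/-- The i-th prime, 1-indexed: `nthPrime 1 = 2`, `nthPrime 2 = 3`, ... -/
noncomputable def nthPrime (i : ℕ) : ℕ := Nat.nth Nat.Prime (i - 1)

/-- `primProd k` is the product `P_k` of the first `k` primes. -/
noncomputable def primProd (k : ℕ) : ℕ := ∏ i ∈ Finset.range k, Nat.nth Nat.Prime i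

/-- `Fcount b m d` is the number of integers `a` with `b < a ≤ b + m` divisible by `d`. -/
noncomputable def Fcount (b : ℤ) (m d : ℕ) : ℕ :=
  ((Finset.Ioc b (b + (m : ℤ))).filter (fun a => (d : ℤ) ∣ a)).card

/-- `phiInt b m k` is the number of integers `a` with `b < a ≤ b + m` coprime to `P_k`. -/
noncomputable def phiInt (b : ℤ) (m k : ℕ) : ℕ :=
  ((Finset.Ioc b (b + (m : ℤ))).filter (fun a => Int.gcd a (primProd k) = 1)).card

/-- `omegaK k a` is the number of indices `i` with `1 ≤ i ≤ k` such that `p_i ∣ a`. -/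
noncomputable def omegaK (k : ℕ) (a : ℤ) : ℕ :=
  ((Finset.Icc 1 k).filter (fun i => (nthPrime i : ℤ) ∣ a)).card

/-- `phiMin m k` is the minimum of `phiInt b m k` over all integers `b`. -/
noncomputable def phiMin (m k : ℕ) : ℕ := sInf {n : ℕ | ∃ b : ℤ, phiInt b m k = n}

/-!
Shifting the window `(b, b + m]` one step to the left trades `b + m` for `b`. If `b` is even it
is not coprime to `P_k` (as `2 ∣ P_k`), so the shift does not increase `φ`: the minimum is attained
at an odd `b`. If `m ≡ 1 (mod d)`, a window of length `m` contains `⌈m/d⌉` multiples of `d` only when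
it starts at one, i.e. `d ∣ b + 1`. For `b` and `p` odd, `p ∣ b + 1` then gives `2p ∣ b + 1`, and a
window starting at a multiple of `2p` contains `⌈m/(2p)⌉` of them.
-/

lemma fcount_eq_ediv_sub_ediv (b : ℤ) (m : ℕ) {d : ℕ} (hd : 0 < d) :
    (Fcount b m d : ℤ) = (b + m) / d - b / d := by
  rw [Fcount, Int.Ioc_filter_dvd_card _ _ (by exact_mod_cast hd)]
  simp only [Int.cast_natCast, Rat.floor_intCast_div_natCast]
  exact max_eq_left (sub_nonneg.mpr (Int.ediv_le_ediv (by positivity) (by simp)))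

lemma fcount_one (b : ℤ) (d : ℕ) : Fcount b 1 d = if (d : ℤ) ∣ b + 1 then 1 else 0 := by
  have hwindow : Ioc b (b + 1) = {b + 1} := by
    ext a
    simp only [mem_Ioc, mem_singleton]
    omega
  rw [Fcount, Nat.cast_one, hwindow, filter_singleton]
  split_ifs <;> rfl

lemma ceil_natCast_div_eq_ediv_add_one (m : ℕ) {d : ℕ} (hd : 0 < d) :
    ⌈(m : ℚ) / d⌉ = ((m : ℤ) - 1) / d + 1 := by
  have hd' : (0 : ℤ) < d := by exact_mod_cast hd
  have hlow : ((m : ℤ) - 1) / d * d ≤ m - 1 := Int.ediv_mul_le _ hd'.ne'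
  have hhigh : (m : ℤ) - 1 < (((m : ℤ) - 1) / d + 1) * d := Int.lt_ediv_add_one_mul_self _ hd'
  rw [Int.ceil_eq_iff, lt_div_iff₀ (by positivity), div_le_iff₀ (by positivity)]
  constructor
  · push_cast
    exact_mod_cast (by linarith : ((((m : ℤ) - 1) / d + 1 - 1) * d) < m)
  · exact_mod_cast (by linarith : (m : ℤ) ≤ (((m : ℤ) - 1) / d + 1) * d)

lemma fcount_eq_ceil_of_dvd (b : ℤ) (m : ℕ) {d : ℕ} (hd : 0 < d) (h : (d : ℤ) ∣ b + 1) :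
    (Fcount b m d : ℤ) = ⌈(m : ℚ) / d⌉ := by
  obtain ⟨c, hc⟩ := h
  have hd' : (0 : ℤ) < d := by exact_mod_cast hd
  rw [fcount_eq_ediv_sub_ediv b m hd, ceil_natCast_div_eq_ediv_add_one m hd,
    show b + m = ((m : ℤ) - 1) + d * c by linarith,
    show b = ((d : ℤ) - 1) + d * (c - 1) by linarith,
    Int.add_mul_ediv_left _ _ hd'.ne', Int.add_mul_ediv_left _ _ hd'.ne',
    Int.ediv_eq_zero_of_lt (a := (d : ℤ) - 1) (by linarith) (by linarith)]
  ring

lemma dvd_of_fcount_eq_ceil (b : ℤ) (m : ℕ) {d : ℕ} (hd : 0 < d) (hm : (d : ℤ) ∣ m - 1)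
    (h : (Fcount b m d : ℤ) = ⌈(m : ℚ) / d⌉) : (d : ℤ) ∣ b + 1 := by
  obtain ⟨q, hq⟩ := hm
  have hd' : (d : ℤ) ≠ 0 := by positivity
  have hsplit : (Fcount b m d : ℤ) = Fcount b 1 d + q := by
    rw [fcount_eq_ediv_sub_ediv b m hd, fcount_eq_ediv_sub_ediv b 1 hd,
      show b + m = b + 1 + d * q by linarith, Int.add_mul_ediv_left _ _ hd']
    push_cast
    ring
  have hceil : ⌈(m : ℚ) / d⌉ = q + 1 := by
    rw [ceil_natCast_div_eq_ediv_add_one m hd, hq, Int.mul_ediv_cancel_left _ hd']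
  rw [hsplit, hceil, fcount_one] at h
  by_contra hndvd
  simp [hndvd] at h

lemma fcount_two_mul_eq_ceil {b : ℤ} (hb : Odd b) {m p : ℕ} (hp : Odd p)
    (hpm : (p : ℤ) ∣ m - 1) (h : (Fcount b m p : ℤ) = ⌈(m : ℚ) / p⌉) :
    (Fcount b m (2 * p) : ℤ) = ⌈(m : ℚ) / ((2 * p : ℕ) : ℚ)⌉ := by
  refine fcount_eq_ceil_of_dvd b m (by have := hp.pos; omega) ?_
  have hcop : IsCoprime (2 : ℤ) p := Nat.Coprime.isCoprime (Nat.coprime_two_left.mpr hp)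
  push_cast
  exact hcop.mul_dvd hb.add_one.two_dvd (dvd_of_fcount_eq_ceil b m hp.pos hpm h)

lemma two_dvd_primProd {k : ℕ} (hk : 1 ≤ k) : 2 ∣ primProd k :=
  Nat.nth_prime_zero_eq_two ▸ dvd_prod_of_mem _ (mem_range.mpr hk)

lemma phiMin_le (b : ℤ) (m k : ℕ) : phiMin m k ≤ phiInt b m k :=
  Nat.sInf_le ⟨b, rfl⟩

lemma exists_phiInt_eq_phiMin (m k : ℕ) : ∃ b, phiInt b m k = phiMin m k :=
  Nat.sInf_mem (s := {n | ∃ b : ℤ, phiInt b m k = n}) ⟨phiInt 0 m k, 0, rfl⟩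

lemma phiInt_sub_one_le {b : ℤ} (m : ℕ) {k : ℕ} (hb : Int.gcd b (primProd k) ≠ 1) :
    phiInt (b - 1) m k ≤ phiInt b m k := by
  refine card_le_card fun a ha => ?_
  simp only [mem_filter, mem_Ioc] at ha ⊢
  obtain ⟨⟨hba, ham⟩, hcop⟩ := ha
  have hab : a ≠ b := by
    rintro rfl
    exact hb hcop
  exact ⟨⟨by omega, by omega⟩, hcop⟩

lemma exists_odd_phiInt_eq_phiMin (m : ℕ) {k : ℕ} (hk : 1 ≤ k) :
    ∃ b, Odd b ∧ phiInt b m k = phiMin m k := by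
  obtain ⟨b, hb⟩ := exists_phiInt_eq_phiMin m k
  rcases Int.even_or_odd b with heven | hodd
  · refine ⟨b - 1, heven.sub_odd odd_one, le_antisymm ?_ (phiMin_le _ m k)⟩
    rw [← hb]
    refine phiInt_sub_one_le m fun hcop => ?_
    have h2 : (2 : ℤ) ∣ (Int.gcd b (primProd k) : ℤ) :=
      Int.dvd_coe_gcd heven.two_dvd (by exact_mod_cast two_dvd_primProd hk)
    rw [hcop] at h2
    norm_num at h2
  · exact ⟨b, hodd, hb⟩

/-- For all `m ≥ 0`, `k ≥ 1` there exists `b` with `φ(b,m,k) = φ_min(m,k)` such that for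
every odd prime `p` dividing `m − 1`, `F_{b,m}(p) = ⌈m/p⌉` implies `F_{b,m}(2p) = ⌈m/(2p)⌉`. -/
theorem exists_min_witness (m k : ℕ) (hk : 1 ≤ k) :
    ∃ b : ℤ, phiInt b m k = phiMin m k ∧
      ∀ p : ℕ, p.Prime → Odd p → (p : ℤ) ∣ ((m : ℤ) - 1) →
        (Fcount b m p : ℤ) = ⌈(m : ℚ) / (p : ℚ)⌉ →
        (Fcount b m (2 * p) : ℤ) = ⌈(m : ℚ) / ((2 * p : ℕ) : ℚ)⌉ := by
  obtain ⟨b, hodd, hb⟩ := exists_odd_phiInt_eq_phiMin m hk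
  exact ⟨b, hb, fun _ _ hp hpm => fcount_two_mul_eq_ceil hodd hp hpm⟩
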